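/- Let $d$ denote the hyperbolic distance on $\mathbb{H}^N$ and on $\mathbb{H}^\infty$, and for $0 < t \le 1$ let $f_t : \mathbb{H}^N \to \mathbb{H}^\infty$ be any map satisfying $(\cosh d(x,y))^t = \cosh d(f_t(x), f_t(y))$ for all $x,y$. Then for all $x, y \in \mathbb{H}^N$: $t\, d(x,y) \le d(f_t(x), f_t(y)) \le \min(t\, d(x,y) + \ln 2,\ d(x,y))$. In particular $f_t$ is a $(t, \ln 2)$-quasi-isometric embedding. -/

import Mathlib

/-!
With `u = d(x,y)` and `v = d(f x, f y)` we have `cosh v = (cosh u) ^ t`. Concavity of `s ↦ s ^ t`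
applied to `cosh u = (eᵘ + e⁻ᵘ)/2` gives `cosh (t u) ≤ cosh v`, i.e. `t u ≤ v`. Conversely
`(cosh u) ^ t ≤ e^{t u} ≤ cosh (t u + log 2)` and `(cosh u) ^ t ≤ cosh u` (as `cosh u ≥ 1`), and `cosh` is
increasing on `[0, ∞)`.
-/

open Real

namespace Real

lemma cosh_mul_le_cosh_rpow {t : ℝ} (ht0 : 0 ≤ t) (ht1 : t ≤ 1) (u : ℝ) :
    cosh (t * u) ≤ cosh u ^ t := by
  have hconc := (concaveOn_rpow ht0 ht1).2 (Set.mem_Ici.2 (exp_pos u).le)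
    (Set.mem_Ici.2 (exp_pos (-u)).le) (by norm_num : (0 : ℝ) ≤ 1 / 2)
    (by norm_num : (0 : ℝ) ≤ 1 / 2) (by norm_num)
  simp only [smul_eq_mul] at hconc
  calc cosh (t * u) = 1 / 2 * exp u ^ t + 1 / 2 * exp (-u) ^ t := by
        rw [← exp_mul, ← exp_mul, cosh_eq]; ring_nf
    _ ≤ (1 / 2 * exp u + 1 / 2 * exp (-u)) ^ t := hconc
    _ = cosh u ^ t := by rw [cosh_eq]; ring_nf

lemma cosh_le_exp_of_nonneg {u : ℝ} (hu : 0 ≤ u) : cosh u ≤ exp u := by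
  rw [← cosh_add_sinh]
  exact le_add_of_nonneg_right (sinh_nonneg_iff.2 hu)

lemma exp_le_cosh_add_log_two (w : ℝ) : exp w ≤ cosh (w + log 2) := by
  rw [cosh_eq, exp_add, exp_log two_pos]
  nlinarith [exp_pos (-(w + log 2))]

end Real

section CoshRpow

variable {t u v : ℝ}

lemma mul_le_of_cosh_rpow_eq (ht0 : 0 ≤ t) (ht1 : t ≤ 1) (hu : 0 ≤ u) (hv : 0 ≤ v)
    (h : cosh u ^ t = cosh v) : t * u ≤ v :=
  (cosh_strictMonoOn.le_iff_le (mul_nonneg ht0 hu) hv).1 (h ▸ cosh_mul_le_cosh_rpow ht0 ht1 u)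

lemma le_mul_add_log_two_of_cosh_rpow_eq (ht0 : 0 ≤ t) (hu : 0 ≤ u) (hv : 0 ≤ v)
    (h : cosh u ^ t = cosh v) : v ≤ t * u + log 2 := by
  refine (cosh_strictMonoOn.le_iff_le hv (Set.mem_Ici.2 (by positivity))).1 ?_
  calc cosh v = cosh u ^ t := h.symm
    _ ≤ exp u ^ t := rpow_le_rpow (cosh_pos u).le (cosh_le_exp_of_nonneg hu) ht0
    _ = exp (t * u) := by rw [← exp_mul, mul_comm]
    _ ≤ cosh (t * u + log 2) := exp_le_cosh_add_log_two _

lemma le_of_cosh_rpow_eq (ht1 : t ≤ 1) (hu : 0 ≤ u) (hv : 0 ≤ v)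
    (h : cosh u ^ t = cosh v) : v ≤ u :=
  (cosh_strictMonoOn.le_iff_le hv hu).1 (h ▸ rpow_le_self_of_one_le (one_le_cosh u) ht1)

end CoshRpow

/-- If `f : ℍ^N → ℍ^∞` satisfies `(cosh d(x,y))^t = cosh d(f x, f y)` for `0 < t ≤ 1`,
then for all `x y`: `t d(x,y) ≤ d(f x, f y) ≤ min (t d(x,y) + log 2) (d(x,y))`.
In particular `f` is a quasi-isometric embedding with multiplicative constant `t` and
additive constant `log 2`. The hyperbolic spaces are represented as abstract metric spaces. -/
theorem stmt_0 {HN Hinf : Type*} [MetricSpace HN] [MetricSpace Hinf]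
    (t : ℝ) (ht0 : 0 < t) (ht1 : t ≤ 1) (f : HN → Hinf)
    (hf : ∀ x y : HN, Real.cosh (dist x y) ^ t = Real.cosh (dist (f x) (f y))) :
    ∀ x y : HN,
      t * dist x y ≤ dist (f x) (f y) ∧
      dist (f x) (f y) ≤ min (t * dist x y + Real.log 2) (dist x y) := fun x y =>
  ⟨mul_le_of_cosh_rpow_eq ht0.le ht1 dist_nonneg dist_nonneg (hf x y),
    le_min (le_mul_add_log_two_of_cosh_rpow_eq ht0.le dist_nonneg dist_nonneg (hf x y))
      (le_of_cosh_rpow_eq ht1 dist_nonneg dist_nonneg (hf x y))⟩
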